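/- Let N be a positive integer, let H be an N×N Hermitian complex matrix, and let v_1, v_2 ∈ ℂ^N be unit vectors with H v_1 = e_1 v_1 and H v_2 = e_2 v_2 for real numbers e_1, e_2. Let ρ be an N×N positive semidefinite complex matrix with trace 1 (a density matrix), let σ > 0, let g(t) = (2πσ²)^{−1/2}·exp(−t²/(2σ²)), and define ω := ∫_ℝ g(t) · exp(−itH) ρ exp(itH) dt. Then |⟨v_1, ω v_2⟩| ≤ exp(−σ²(e_1−e_2)²/2). -/

import Mathlib

open scoped BigOperators Matrix ComplexOrder

/-- The centered Gaussian probability density with variance `σ²`: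
`g(t) = (2πσ²)^{-1/2} exp(-t²/(2σ²))`. -/
noncomputable def gaussDensity (σ t : ℝ) : ℝ :=
  (Real.sqrt (2 * Real.pi * σ ^ 2))⁻¹ * Real.exp (-t ^ 2 / (2 * σ ^ 2))

/-- The Gaussian time-average `ω = ∫ g(t) exp(-itH) ρ exp(itH) dt`, defined as an
entrywise Bochner integral (each entry is a `ℂ`-valued Bochner integral). -/
noncomputable def gaussTimeAverage {N : ℕ} (σ : ℝ) (H ρ : Matrix (Fin N) (Fin N) ℂ) :
    Matrix (Fin N) (Fin N) ℂ :=
  Matrix.of fun i j => ∫ t : ℝ, (gaussDensity σ t : ℂ) *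
    ((NormedSpace.exp ((-(Complex.I * (t : ℂ))) • H) * ρ *
        NormedSpace.exp ((Complex.I * (t : ℂ)) • H)) i j)

/-! For eigenvectors `v₁, v₂` of `H` the time evolution only contributes phases,
`⟨v₁, e^{-itH} ρ e^{itH} v₂⟩ = e^{it(e₂ - e₁)} ⟨v₁, ρ v₂⟩`, so the Gaussian average multiplies the
coherence `⟨v₁, ρ v₂⟩` by the characteristic function `e^{-σ²(e₁ - e₂)²/2}` of the Gaussian.
Writing `ρ = ∑ wₖ wₖ*` and applying Cauchy–Schwarz to each term gives
`|⟨x, ρ y⟩| ≤ ‖x‖ ‖y‖ tr ρ`; this bounds the coherence by `1`, and it bounds the entries of the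
unitarily conjugated states `e^{-itH} ρ e^{itH}` uniformly in `t`, so that every entry of the
integrand defining the average is integrable. -/

open MeasureTheory ProbabilityTheory Complex

namespace Matrix

variable {m n : Type*} [Fintype m] [Fintype n]

theorem norm_star_dotProduct_le (x y : n → ℂ) :
    ‖star x ⬝ᵥ y‖ ≤ √(star x ⬝ᵥ x).re * √(star y ⬝ᵥ y).re := by
  have h := norm_inner_le_norm (𝕜 := ℂ) (WithLp.toLp 2 x) (WithLp.toLp 2 y)
  rwa [norm_eq_sqrt_re_inner (𝕜 := ℂ) (WithLp.toLp 2 x),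
    norm_eq_sqrt_re_inner (𝕜 := ℂ) (WithLp.toLp 2 y), EuclideanSpace.inner_toLp_toLp,
    EuclideanSpace.inner_toLp_toLp, EuclideanSpace.inner_toLp_toLp, dotProduct_comm y,
    dotProduct_comm x, dotProduct_comm y] at h

theorem PosSemidef.norm_star_dotProduct_mulVec_le {ρ : Matrix n n ℂ} (hρ : ρ.PosSemidef)
    (x y : n → ℂ) :
    ‖star x ⬝ᵥ ρ *ᵥ y‖ ≤ √(star x ⬝ᵥ x).re * √(star y ⬝ᵥ y).re * ρ.trace.re := by
  obtain ⟨k, w, rfl⟩ := posSemidef_iff_eq_sum_vecMulVec.mp hρ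
  have hsq : ∀ i, √(star (w i) ⬝ᵥ w i).re * √(star (w i) ⬝ᵥ w i).re = (star (w i) ⬝ᵥ w i).re :=
    fun i => Real.mul_self_sqrt (Complex.nonneg_iff.mp (dotProduct_star_self_nonneg (w i))).1
  calc ‖star x ⬝ᵥ (∑ i, vecMulVec (w i) (star (w i))) *ᵥ y‖
      = ‖∑ i, (star x ⬝ᵥ w i) * (star (w i) ⬝ᵥ y)‖ := by
        simp only [sum_mulVec, dotProduct_sum, vecMulVec_mulVec, op_smul_eq_smul,
          dotProduct_smul, smul_eq_mul, mul_comm]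
    _ ≤ ∑ i, ‖star x ⬝ᵥ w i‖ * ‖star (w i) ⬝ᵥ y‖ := by
        refine (norm_sum_le _ _).trans_eq ?_
        simp only [norm_mul]
    _ ≤ ∑ i, (√(star x ⬝ᵥ x).re * √(star (w i) ⬝ᵥ w i).re) *
          (√(star (w i) ⬝ᵥ w i).re * √(star y ⬝ᵥ y).re) := by
        gcongr with i <;> exact norm_star_dotProduct_le _ _
    _ = √(star x ⬝ᵥ x).re * √(star y ⬝ᵥ y).re * (∑ i, vecMulVec (w i) (star (w i))).trace.re := by
        simp only [trace_sum, trace_vecMulVec, re_sum, Finset.mul_sum, dotProduct_comm (w _)]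
        refine Finset.sum_congr rfl fun i _ => ?_
        linear_combination √(star x ⬝ᵥ x).re * √(star y ⬝ᵥ y).re * hsq i

theorem star_dotProduct_conjTranspose_mul_mul_mulVec {R : Type*} [CommSemiring R] [StarRing R]
    (U ρ : Matrix n n R) (x y : n → R) :
    star x ⬝ᵥ (Uᴴ * ρ * U) *ᵥ y = star (U *ᵥ x) ⬝ᵥ ρ *ᵥ (U *ᵥ y) := by
  rw [← mulVec_mulVec, ← mulVec_mulVec, dotProduct_mulVec, star_mulVec]

theorem dotProduct_mulVec_integral {𝕜 α : Type*} [RCLike 𝕜] [MeasurableSpace α] {μ : Measure α}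
    {F : α → Matrix m n 𝕜} (hF : ∀ i j, Integrable (fun a => F a i j) μ) (x : m → 𝕜) (y : n → 𝕜) :
    x ⬝ᵥ (of fun i j => ∫ a, F a i j ∂μ) *ᵥ y = ∫ a, x ⬝ᵥ F a *ᵥ y ∂μ := by
  have hterm : ∀ i j, Integrable (fun a => x i * (F a i j * y j)) μ :=
    fun i j => ((hF i j).mul_const _).const_mul _
  simp only [dotProduct, mulVec, of_apply, Finset.mul_sum]
  rw [integral_finsetSum _ fun i _ => integrable_finsetSum _ fun j _ => hterm i j]
  refine Finset.sum_congr rfl fun i _ => ?_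
  rw [integral_finsetSum _ fun j _ => hterm i j]
  refine Finset.sum_congr rfl fun j _ => ?_
  rw [integral_const_mul, integral_mul_const]

variable [DecidableEq n]

theorem PosSemidef.norm_apply_le {ρ : Matrix n n ℂ} (hρ : ρ.PosSemidef) (i j : n) :
    ‖ρ i j‖ ≤ ρ.trace.re := by
  simpa using hρ.norm_star_dotProduct_mulVec_le (Pi.single i 1) (Pi.single j 1)

theorem exp_mulVec_of_mulVec_eq_smul {M : Matrix n n ℂ} {v : n → ℂ} {μ : ℂ}
    (h : M *ᵥ v = μ • v) : NormedSpace.exp M *ᵥ v = cexp μ • v := by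
  have hpow : ∀ k : ℕ, (M ^ k) *ᵥ v = μ ^ k • v := by
    intro k
    induction k with
    | zero => simp
    | succ k ih => rw [pow_succ, ← mulVec_mulVec, h, mulVec_smul, ih, smul_smul, pow_succ']
  open scoped Norms.Operator in
  let evalAt : Matrix n n ℂ →+ (n → ℂ) := AddMonoidHom.mk' (· *ᵥ v) (fun A B => add_mulVec A B v)
  have hM := (NormedSpace.exp_series_hasSum_exp' (𝕂 := ℂ) M).map evalAt
    (continuous_id.matrix_mulVec continuous_const)
  have hμ := (NormedSpace.exp_series_hasSum_exp' (𝕂 := ℂ) μ).smul_const v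
  rw [← Complex.exp_eq_exp_ℂ] at hμ
  refine hM.unique (hμ.congr_fun fun k => ?_)
  simp [evalAt, smul_mulVec, hpow, smul_smul]

theorem IsHermitian.conjTranspose_exp_smul {H : Matrix n n ℂ} (hH : H.IsHermitian) (c : ℂ) :
    (NormedSpace.exp (c • H))ᴴ = NormedSpace.exp (star c • H) := by
  rw [← exp_conjTranspose, conjTranspose_smul, hH.eq]

theorem IsHermitian.exp_I_mul_smul_mem_unitaryGroup {H : Matrix n n ℂ} (hH : H.IsHermitian)
    (t : ℝ) : NormedSpace.exp ((I * t) • H) ∈ unitaryGroup n ℂ := by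
  rw [mem_unitaryGroup_iff', star_eq_conjTranspose, hH.conjTranspose_exp_smul,
    ← exp_add_of_commute _ _ ((Commute.refl H).smul_left _ |>.smul_right _)]
  simp

theorem continuous_exp_smul (H : Matrix n n ℂ) :
    Continuous fun c : ℂ => NormedSpace.exp (c • H) := by
  open scoped Norms.Operator in
  exact NormedSpace.exp_continuous.comp (continuous_id.smul continuous_const)

theorem PosSemidef.norm_conjTranspose_mul_mul_apply_le {ρ U : Matrix n n ℂ} (hρ : ρ.PosSemidef)
    (hU : U ∈ unitaryGroup n ℂ) (i j : n) : ‖(Uᴴ * ρ * U) i j‖ ≤ ρ.trace.re := by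
  have h := (hρ.conjTranspose_mul_mul_same U).norm_apply_le i j
  rwa [trace_mul_cycle, ← star_eq_conjTranspose, mem_unitaryGroup_iff.mp hU, one_mul] at h

theorem IsHermitian.exp_neg_I_mul_smul {H : Matrix n n ℂ} (hH : H.IsHermitian) (t : ℝ) :
    NormedSpace.exp ((-(I * t)) • H) = (NormedSpace.exp ((I * t) • H))ᴴ := by
  rw [hH.conjTranspose_exp_smul]
  simp

theorem IsHermitian.star_dotProduct_exp_mul_mul_exp_mulVec {H : Matrix n n ℂ} (hH : H.IsHermitian)
    {v₁ v₂ : n → ℂ} {e₁ e₂ : ℝ} (hv₁ : H *ᵥ v₁ = (e₁ : ℂ) • v₁) (hv₂ : H *ᵥ v₂ = (e₂ : ℂ) • v₂)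
    (ρ : Matrix n n ℂ) (t : ℝ) :
    star v₁ ⬝ᵥ (NormedSpace.exp ((-(I * t)) • H) * ρ * NormedSpace.exp ((I * t) • H)) *ᵥ v₂
      = cexp ((e₂ - e₁ : ℝ) * t * I) * (star v₁ ⬝ᵥ ρ *ᵥ v₂) := by
  have hexp : ∀ {v : n → ℂ} {e : ℝ}, H *ᵥ v = (e : ℂ) • v →
      NormedSpace.exp ((I * t) • H) *ᵥ v = cexp (I * t * e) • v :=
    fun hv => exp_mulVec_of_mulVec_eq_smul (by rw [smul_mulVec, hv, smul_smul])
  rw [hH.exp_neg_I_mul_smul, star_dotProduct_conjTranspose_mul_mul_mulVec, hexp hv₁, hexp hv₂,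
    star_smul, smul_dotProduct, mulVec_smul, dotProduct_smul, smul_eq_mul, smul_eq_mul,
    ← mul_assoc, RCLike.star_def, ← Complex.exp_conj, ← Complex.exp_add]
  congr 2
  simp only [map_mul, conj_I, conj_ofReal, neg_mul, ofReal_sub]
  ring

end Matrix

theorem gaussDensity_eq_gaussianPDFReal (σ : ℝ) :
    gaussDensity σ = gaussianPDFReal 0 (σ ^ 2).toNNReal := by
  ext t
  simp [gaussDensity, gaussianPDFReal, Real.coe_toNNReal _ (sq_nonneg σ)]

theorem integrable_gaussDensity_mul {f : ℝ → ℂ} (hf : AEStronglyMeasurable f) {C : ℝ}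
    (hC : ∀ t, ‖f t‖ ≤ C) (σ : ℝ) : Integrable fun t => (gaussDensity σ t : ℂ) * f t := by
  have hg : Integrable fun t => (gaussDensity σ t : ℂ) := by
    rw [gaussDensity_eq_gaussianPDFReal]
    exact (integrable_gaussianPDFReal _ _).ofReal
  simpa only [mul_comm] using hg.bdd_mul hf (ae_of_all _ hC)

theorem integral_gaussDensity_mul_cexp {σ : ℝ} (hσ : σ ≠ 0) (ω : ℝ) :
    ∫ t, (gaussDensity σ t : ℂ) * cexp (ω * t * I) = Real.exp (-(σ ^ 2 * ω ^ 2) / 2) := by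
  have hv : (σ ^ 2).toNNReal ≠ 0 := by simpa using hσ
  have hchar := charFun_gaussianReal (μ := 0) (v := (σ ^ 2).toNNReal) ω
  rw [charFun_apply_real, integral_gaussianReal_eq_integral_smul hv] at hchar
  simp only [Complex.real_smul] at hchar
  rw [gaussDensity_eq_gaussianPDFReal, hchar]
  push_cast [Real.coe_toNNReal _ (sq_nonneg σ)]
  ring_nf

theorem integrable_gaussDensity_mul_exp_mul_mul_exp_apply {n : Type*} [Fintype n]
    [DecidableEq n] {H ρ : Matrix n n ℂ} (hH : H.IsHermitian) (hρ : ρ.PosSemidef) (σ : ℝ)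
    (i j : n) :
    Integrable fun t : ℝ => (gaussDensity σ t : ℂ) *
      (NormedSpace.exp ((-(I * t)) • H) * ρ * NormedSpace.exp ((I * t) • H)) i j := by
  refine integrable_gaussDensity_mul (C := ρ.trace.re) ?_ (fun t => ?_) σ
  · have hcont : Continuous fun t : ℝ =>
        NormedSpace.exp ((-(I * t)) • H) * ρ * NormedSpace.exp ((I * t) • H) :=
      (((Matrix.continuous_exp_smul H).comp (by fun_prop)).mul continuous_const).mul
        ((Matrix.continuous_exp_smul H).comp (by fun_prop))
    exact ((continuous_apply_apply i j).comp hcont).aestronglyMeasurable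
  · rw [hH.exp_neg_I_mul_smul]
    exact hρ.norm_conjTranspose_mul_mul_apply_le (hH.exp_I_mul_smul_mem_unitaryGroup t) i j

theorem gaussTimeAverage_inner_abs_le_general
    (N : ℕ) (H ρ : Matrix (Fin N) (Fin N) ℂ) (hH : H.IsHermitian)
    (hρ : ρ.PosSemidef) (hρtr : ρ.trace = 1)
    (v₁ v₂ : Fin N → ℂ) (e₁ e₂ : ℝ)
    (hv₁unit : star v₁ ⬝ᵥ v₁ = 1) (hv₂unit : star v₂ ⬝ᵥ v₂ = 1)
    (hv₁ : H.mulVec v₁ = (e₁ : ℂ) • v₁) (hv₂ : H.mulVec v₂ = (e₂ : ℂ) • v₂)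
    (σ : ℝ) (hσ : 0 < σ) :
    ‖star v₁ ⬝ᵥ (gaussTimeAverage σ H ρ).mulVec v₂‖
      ≤ Real.exp (-(σ ^ 2 * (e₁ - e₂) ^ 2) / 2) := by
  have hint := integrable_gaussDensity_mul_exp_mul_mul_exp_apply hH hρ σ
  have hω : star v₁ ⬝ᵥ gaussTimeAverage σ H ρ *ᵥ v₂
      = Real.exp (-(σ ^ 2 * (e₂ - e₁) ^ 2) / 2) * (star v₁ ⬝ᵥ ρ *ᵥ v₂) := by
    refine (Matrix.dotProduct_mulVec_integral (F := fun t : ℝ => (gaussDensity σ t : ℂ) •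
      (NormedSpace.exp ((-(I * t)) • H) * ρ * NormedSpace.exp ((I * t) • H))) hint _ _).trans ?_
    simp_rw [Matrix.smul_mulVec, dotProduct_smul, hH.star_dotProduct_exp_mul_mul_exp_mulVec hv₁ hv₂,
      smul_eq_mul, ← mul_assoc]
    rw [integral_mul_const, integral_gaussDensity_mul_cexp hσ.ne']
  have hc : ‖star v₁ ⬝ᵥ ρ *ᵥ v₂‖ ≤ 1 := by
    simpa [hv₁unit, hv₂unit, hρtr] using hρ.norm_star_dotProduct_mulVec_le v₁ v₂
  rw [hω, norm_mul, Complex.norm_real, Real.norm_of_nonneg (Real.exp_pos _).le, sub_sq_comm]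
  exact mul_le_of_le_one_right (Real.exp_pos _).le hc

/-- **Weak-diagonality inequality (ineq1)/(eqCoherences) of Theorem
`TheWeakLocalDiagonality`:** if `v₁, v₂` are unit eigenvectors of a Hermitian matrix `H`
with eigenvalues `e₁, e₂`, and `ρ` is a density matrix (positive semidefinite, trace 1),
then the Gaussian time-average `ω` of `ρ` satisfies
`|⟨v₁, ω v₂⟩| ≤ exp(-σ²(e₁-e₂)²/2)`. -/
theorem gaussTimeAverage_inner_abs_le
    (N : ℕ) (hN : 0 < N) (H ρ : Matrix (Fin N) (Fin N) ℂ) (hH : H.IsHermitian)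
    (hρ : ρ.PosSemidef) (hρtr : ρ.trace = 1)
    (v₁ v₂ : Fin N → ℂ) (e₁ e₂ : ℝ)
    (hv₁unit : star v₁ ⬝ᵥ v₁ = 1) (hv₂unit : star v₂ ⬝ᵥ v₂ = 1)
    (hv₁ : H.mulVec v₁ = (e₁ : ℂ) • v₁) (hv₂ : H.mulVec v₂ = (e₂ : ℂ) • v₂)
    (σ : ℝ) (hσ : 0 < σ) :
    ‖star v₁ ⬝ᵥ (gaussTimeAverage σ H ρ).mulVec v₂‖
      ≤ Real.exp (-(σ ^ 2 * (e₁ - e₂) ^ 2) / 2) :=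
  gaussTimeAverage_inner_abs_le_general N H ρ hH hρ hρtr v₁ v₂ e₁ e₂ hv₁unit hv₂unit hv₁ hv₂ σ hσ
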